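/- Fix p ∈ (0,1) and work with 2×2 complex matrices. Let C_p := {p·ρ + ((1−p)/2)·(Tr ρ)·I : ρ is a 2×2 positive semidefinite matrix}. Let P_1, P_2 be rank-one orthogonal projections with P_1 + P_2 = I, and define M := −((1−p)/(2p))·P_1 + ((1+p)/(2p))·P_2, ρ_1 := p·P_1 + ((1−p)/2)·I, and ρ_2 := p·P_2 + ((1−p)/2)·I. Then: (i) for every σ ∈ C_p with Tr σ = 1 one has 0 ≤ Tr(σ·M) and 0 ≤ Tr(σ·(I − M)), so {M, I − M} is a measurement of the model C_p; (ii) ρ_1, ρ_2 ∈ C_p are trace-1 and satisfy Tr(ρ_1·M) = 0 and Tr(ρ_2·M) = 1, so the measurement perfectly discriminates ρ_1 and ρ_2; and (iii) Tr(ρ_1·ρ_2) > 0, i.e., ρ_1 and ρ_2 are not orthogonal. -/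

import Mathlib

open ComplexOrder
open Matrix

/-- The shrunk Bloch sphere cone
`C_p = {p·ρ + ((1−p)/2)·(Tr ρ)·I : ρ positive semidefinite}`. -/
def shrunkCone (p : ℝ) : Set (Matrix (Fin 2) (Fin 2) ℂ) :=
  {X | ∃ ρ : Matrix (Fin 2) (Fin 2) ℂ, ρ.PosSemidef ∧
    X = (p : ℂ) • ρ + ((((1 - p) / 2 : ℝ) : ℂ) * ρ.trace) • (1 : Matrix (Fin 2) (Fin 2) ℂ)}

lemma aux_trace_eq_rank (P : Matrix (Fin 2) (Fin 2) ℂ) (hPi : P * P = P) :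
    P.trace = (P.rank : ℂ) := by
  have hcomp : P.mulVecLin ∘ₗ P.mulVecLin = P.mulVecLin := by
    rw [← Matrix.mulVecLin_mul, hPi]
  have hproj : LinearMap.IsProj (LinearMap.range P.mulVecLin) P.mulVecLin := by
    refine ⟨fun x => LinearMap.mem_range_self _ x, ?_⟩
    rintro x ⟨y, rfl⟩
    exact DFunLike.congr_fun hcomp y
  have h1 := hproj.trace
  rw [LinearMap.trace_eq_matrix_trace ℂ (Pi.basisFun ℂ (Fin 2)),
    LinearMap.toMatrix_eq_toMatrix', ← Matrix.toLin'_apply' P,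
    LinearMap.toMatrix'_toLin'] at h1
  rw [Matrix.rank]
  exact_mod_cast h1

lemma aux_trace_mul_nonneg {A B : Matrix (Fin 2) (Fin 2) ℂ}
    (hA : A.PosSemidef) (hB : B.PosSemidef) : 0 ≤ (A * B).trace := by
  obtain ⟨X, rfl⟩ : ∃ X : Matrix (Fin 2) (Fin 2) ℂ, A = Xᴴ * X := by
    open scoped MatrixOrder in exact CStarAlgebra.nonneg_iff_eq_star_mul_self.mp hA.nonneg
  obtain ⟨Y, rfl⟩ : ∃ Y : Matrix (Fin 2) (Fin 2) ℂ, B = Yᴴ * Y := by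
    open scoped MatrixOrder in exact CStarAlgebra.nonneg_iff_eq_star_mul_self.mp hB.nonneg
  have h : (Xᴴ * X * (Yᴴ * Y)).trace = ((Y * Xᴴ)ᴴ * (Y * Xᴴ)).trace := by
    rw [Matrix.mul_assoc, Matrix.trace_mul_comm, Matrix.conjTranspose_mul,
      Matrix.conjTranspose_conjTranspose]
    congr 1
    simp only [Matrix.mul_assoc]
  rw [h, Matrix.trace]
  refine Finset.sum_nonneg fun i _ => ?_
  rw [Matrix.diag_apply, Matrix.mul_apply]
  refine Finset.sum_nonneg fun j _ => ?_
  simpa [Matrix.conjTranspose_apply] using star_mul_self_nonneg ((Y * Xᴴ) j i)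

lemma aux_psd_of_proj {P : Matrix (Fin 2) (Fin 2) ℂ} (hh : P.IsHermitian)
    (hi : P * P = P) : P.PosSemidef := by
  have h : Pᴴ * P = P := by rw [hh.eq, hi]
  rw [← h]
  exact Matrix.posSemidef_conjTranspose_mul_self P

theorem stmt_19 (p : ℝ) (hp0 : 0 < p) (hp1 : p < 1)
    (P1 P2 : Matrix (Fin 2) (Fin 2) ℂ)
    (hP1h : P1.IsHermitian) (hP1i : P1 * P1 = P1) (hP1r : P1.rank = 1)
    (hP2h : P2.IsHermitian) (hP2i : P2 * P2 = P2) (hP2r : P2.rank = 1)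
    (hsum : P1 + P2 = 1)
    (M ρ1 ρ2 : Matrix (Fin 2) (Fin 2) ℂ)
    (hM : M = (-((((1 - p) / (2 * p) : ℝ)) : ℂ)) • P1 + ((((1 + p) / (2 * p) : ℝ)) : ℂ) • P2)
    (hρ1 : ρ1 = (p : ℂ) • P1 + (((1 - p) / 2 : ℝ) : ℂ) • (1 : Matrix (Fin 2) (Fin 2) ℂ))
    (hρ2 : ρ2 = (p : ℂ) • P2 + (((1 - p) / 2 : ℝ) : ℂ) • (1 : Matrix (Fin 2) (Fin 2) ℂ)) :
    (∀ σ ∈ shrunkCone p, σ.trace = 1 →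
      0 ≤ (σ * M).trace ∧ 0 ≤ (σ * (1 - M)).trace) ∧
    (ρ1 ∈ shrunkCone p ∧ ρ1.trace = 1 ∧ ρ2 ∈ shrunkCone p ∧ ρ2.trace = 1 ∧
      (ρ1 * M).trace = 0 ∧ (ρ2 * M).trace = 1) ∧
    0 < (ρ1 * ρ2).trace := by
  subst hM hρ1 hρ2
  have hp : (p : ℂ) ≠ 0 := by exact_mod_cast hp0.ne'
  have tP1 : P1.trace = 1 := by rw [aux_trace_eq_rank P1 hP1i, hP1r]; norm_num
  have tP2 : P2.trace = 1 := by rw [aux_trace_eq_rank P2 hP2i, hP2r]; norm_num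
  have hP2eq : P2 = 1 - P1 := eq_sub_of_add_eq' hsum
  have h12 : P1 * P2 = 0 := by rw [hP2eq, Matrix.mul_sub, Matrix.mul_one, hP1i, sub_self]
  have h21 : P2 * P1 = 0 := by rw [hP2eq, Matrix.sub_mul, Matrix.one_mul, hP1i, sub_self]
  have psd1 := aux_psd_of_proj hP1h hP1i
  have psd2 := aux_psd_of_proj hP2h hP2i
  have t11 : (P1 * P1).trace = 1 := by rw [hP1i, tP1]
  have t22 : (P2 * P2).trace = 1 := by rw [hP2i, tP2]
  have t12 : (P1 * P2).trace = 0 := by rw [h12, Matrix.trace_zero]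
  have t21 : (P2 * P1).trace = 0 := by rw [h21, Matrix.trace_zero]
  refine ⟨?_, ⟨⟨P1, psd1, by rw [tP1, mul_one]⟩, ?_, ⟨P2, psd2, by rw [tP2, mul_one]⟩, ?_, ?_, ?_⟩, ?_⟩
  · rintro σ ⟨ρ, hρ, rfl⟩ hστ
    have habt : (ρ * P1).trace + (ρ * P2).trace = ρ.trace := by
      rw [← Matrix.trace_add, ← Matrix.mul_add, hsum, Matrix.mul_one]
    have ha : 0 ≤ (ρ * P1).trace := aux_trace_mul_nonneg hρ psd1
    have hb : 0 ≤ (ρ * P2).trace := aux_trace_mul_nonneg hρ psd2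
    simp only [Matrix.trace_add, Matrix.trace_smul, Matrix.trace_one, Fintype.card_fin, smul_eq_mul] at hστ
    have ht : ρ.trace = 1 := by push_cast at hστ ⊢; linear_combination hστ
    have ha2 : (ρ * P1).trace = 1 - (ρ * P2).trace := by
      rw [ht] at habt; linear_combination habt
    constructor
    · have key : (((p:ℂ) • ρ + ((((1 - p) / 2 : ℝ) : ℂ) * ρ.trace) • 1) *
          ((-((((1 - p) / (2 * p) : ℝ)) : ℂ)) • P1 + ((((1 + p) / (2 * p) : ℝ)) : ℂ) • P2)).trace
          = (ρ * P2).trace := by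
        simp only [Matrix.mul_add, Matrix.add_mul, Matrix.smul_mul, Matrix.mul_smul,
          Matrix.trace_add, Matrix.trace_smul, Matrix.one_mul, smul_eq_mul, neg_smul,
          Matrix.neg_mul, Matrix.trace_neg, Matrix.mul_neg, neg_neg, smul_smul]
        rw [tP1, tP2, ht, ha2]
        push_cast
        field_simp
        ring
      rw [key]; exact hb
    · have key : (((p:ℂ) • ρ + ((((1 - p) / 2 : ℝ) : ℂ) * ρ.trace) • 1) *
          (1 - ((-((((1 - p) / (2 * p) : ℝ)) : ℂ)) • P1 + ((((1 + p) / (2 * p) : ℝ)) : ℂ) • P2))).trace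
          = (ρ * P1).trace := by
        simp only [Matrix.mul_sub, Matrix.mul_add, Matrix.add_mul, Matrix.smul_mul,
          Matrix.mul_smul, Matrix.trace_add, Matrix.trace_sub, Matrix.trace_smul,
          Matrix.one_mul, Matrix.mul_one, smul_eq_mul, neg_smul, Matrix.neg_mul,
          Matrix.trace_neg, Matrix.mul_neg, neg_neg, smul_smul, Matrix.trace_one, Fintype.card_fin]
        rw [tP1, tP2, ht, ha2]
        push_cast
        field_simp
        ring
      rw [key]; exact ha
  · simp only [Matrix.trace_add, Matrix.trace_smul, Matrix.trace_one, Fintype.card_fin, smul_eq_mul, tP1]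
    push_cast; ring
  · simp only [Matrix.trace_add, Matrix.trace_smul, Matrix.trace_one, Fintype.card_fin, smul_eq_mul, tP2]
    push_cast; ring
  · simp only [Matrix.mul_add, Matrix.add_mul, Matrix.smul_mul, Matrix.mul_smul,
      Matrix.trace_add, Matrix.trace_smul, Matrix.one_mul, Matrix.mul_one, smul_eq_mul,
      neg_smul, Matrix.neg_mul, Matrix.trace_neg, Matrix.mul_neg, neg_neg, smul_smul, Fintype.card_fin,
      Matrix.trace_one, Matrix.trace_zero, mul_zero, t11, t12, t21, t22, tP1, tP2]
    push_cast
    field_simp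
    ring
  · simp only [Matrix.mul_add, Matrix.add_mul, Matrix.smul_mul, Matrix.mul_smul,
      Matrix.trace_add, Matrix.trace_smul, Matrix.one_mul, Matrix.mul_one, smul_eq_mul,
      neg_smul, Matrix.neg_mul, Matrix.trace_neg, Matrix.mul_neg, neg_neg, smul_smul, Fintype.card_fin,
      Matrix.trace_one, Matrix.trace_zero, mul_zero, t11, t12, t21, t22, tP1, tP2]
    push_cast
    field_simp
    ring
  · have key : (((p:ℂ) • P1 + (((1 - p) / 2 : ℝ) : ℂ) • 1) *
        ((p:ℂ) • P2 + (((1 - p) / 2 : ℝ) : ℂ) • 1)).trace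
        = ((((1 - p) * (1 + p) / 2 : ℝ)) : ℂ) := by
      simp only [Matrix.mul_add, Matrix.add_mul, Matrix.smul_mul, Matrix.mul_smul,
        Matrix.trace_add, Matrix.trace_smul, Matrix.one_mul, Matrix.mul_one, smul_eq_mul,
        smul_smul, Matrix.trace_zero, mul_zero, Matrix.trace_one, Fintype.card_fin,
        t11, t12, t21, t22, tP1, tP2]
      push_cast
      ring
    rw [key]
    rw [Complex.zero_lt_real]
    nlinarith
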